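/- The abstraction-step reduction →βλ and the inert-step reduction →βi of the fireball calculus strongly commute: if u ←βλ t →βi s, then u ≠ s and there exists r such that u →βi r and s →βλ r. -/
import Mathlib


/-- λ-terms in de Bruijn notation: variables, abstractions, applications. -/
inductive Tm : Type
  | var : Nat → Tm
  | lam : Tm → Tm
  | app : Tm → Tm → Tm

namespace Tm

/-- Shift (by one) the free de Bruijn indices `≥ k`. -/
def shift (k : Nat) : Tm → Tm
  | var n => if k ≤ n then var (n+1) else var n
  | lam t => lam (shift (k+1) t)
  | app t u => app (shift k t) (shift k u)

/-- Capture-avoiding substitution of `u` for the free variable `k` in a term. -/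
def subst : Tm → Nat → Tm → Tm
  | var n, k, u => if n = k then u else if k < n then var (n-1) else var n
  | lam t, k, u => lam (subst t (k+1) (shift 0 u))
  | app t s, k, u => app (subst t k u) (subst s k u)

/-- Values: variables and abstractions. -/
inductive IsValue : Tm → Prop
  | var : IsValue (var n)
  | lam : IsValue (lam t)

end Tm
open Tm

mutual
/-- Inert terms: `i ::= x | i f`. -/
inductive Inert : Tm → Prop
  | var : Inert (.var n)
  | app : Inert i → Fireball f → Inert (.app i f)
/-- Fireballs: `f ::= λx.t | i`. -/
inductive Fireball : Tm → Prop
  | lam : Fireball (.lam t)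
  | inert : Inert i → Fireball i
end

/-- Abstraction steps: root rule `(λx.t)(λy.u) ↦ t[x:=λy.u]`, weak closure. -/
inductive StepBL : Tm → Tm → Prop
  | beta : StepBL (.app (.lam t) (.lam u)) (subst t 0 (.lam u))
  | appL : StepBL t t' → StepBL (.app t u) (.app t' u)
  | appR : StepBL u u' → StepBL (.app t u) (.app t u')

/-- Inert steps: root rule `(λx.t)i ↦ t[x:=i]` with `i` inert, weak closure. -/
inductive StepBI : Tm → Tm → Prop
  | beta : Inert i → StepBI (.app (.lam t) i) (subst t 0 i)
  | appL : StepBI t t' → StepBI (.app t u) (.app t' u)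
  | appR : StepBI u u' → StepBI (.app t u) (.app t u')

/-- The fireball reduction `→βf = →βλ ∪ →βi`. -/
def StepBF (t u : Tm) : Prop := StepBL t u ∨ StepBI t u

/-- Size of a term. -/
def sz : Tm → Nat
  | .var _ => 1
  | .lam t => sz t + 1
  | .app a b => sz a + sz b + 1

mutual
theorem inert_shift {t : Tm} (h : Inert t) (k : Nat) : Inert (shift k t) :=
  match h with
  | .var => by unfold shift; split <;> exact .var
  | .app hi hf => Inert.app (inert_shift hi k) (fireball_shift hf k)
theorem fireball_shift {t : Tm} (h : Fireball t) (k : Nat) : Fireball (shift k t) :=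
  match h with
  | .lam => Fireball.lam
  | .inert hi => .inert (inert_shift hi k)
end

theorem inert_not_lam {a : Tm} (h : Inert (.lam a)) : False := by cases h

theorem noLoop : ∀ n e k i d, sz e ≤ n → Inert i → subst e k i ≠ .app (.lam e) d := by
  intro n
  induction n with
  | zero => intro e; cases e <;> simp [sz] <;> omega
  | succ n ih =>
    intro e k i d hsz hi heq
    cases e with
    | var m =>
      simp only [subst] at heq
      split at heq
      · subst heq; exact inert_not_lam (by cases hi with | app h _ => exact h)
      · split at heq <;> exact Tm.noConfusion heq
    | lam r => exact Tm.noConfusion heq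
    | app p q =>
      simp only [subst] at heq
      injection heq with h1 h2
      cases p with
      | var m =>
        simp only [subst] at h1
        split at h1
        · subst h1; cases hi
        · split at h1 <;> exact Tm.noConfusion h1
      | lam r =>
        simp only [subst] at h1
        injection h1 with h1'
        have hr : sz r ≤ n := by simp [sz] at hsz ⊢; omega
        exact ih r (k+1) (shift 0 i) q hr (inert_shift hi 0) h1'
      | app p1 p2 => exact Tm.noConfusion h1

theorem stepBI_ne {t s : Tm} (h : StepBI t s) : t ≠ s := by
  induction h with
  | beta hI =>
    intro heq
    exact noLoop (sz _) _ 0 _ _ le_rfl hI heq.symm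
  | appL h ih => intro heq; injection heq with h1 h2; exact ih h1
  | appR h ih => intro heq; injection heq with h1 h2; exact ih h2

theorem inert_no_stepBL {a b : Tm} (h : StepBL a b) (hi : Inert a) : False := by
  induction h with
  | beta => cases hi with | app hI _ => exact inert_not_lam hI
  | appL h ih => cases hi with | app hI _ => exact ih hI
  | appR h ih =>
    cases hi with
    | app hI hf =>
      cases hf with
      | lam => cases h
      | inert hI2 => exact ih hI2

/-- `→βλ` and `→βi` strongly commute. -/
theorem betal_betai_strongly_commute (t u s : Tm)
    (h1 : StepBL t u) (h2 : StepBI t s) :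
    u ≠ s ∧ ∃ r, StepBI u r ∧ StepBL s r := by
  induction h1 generalizing s with
  | beta =>
    cases h2 with
    | beta hI => exact absurd hI inert_not_lam
    | appL h => cases h
    | appR h => cases h
  | appL h ih =>
    cases h2 with
    | beta hI => cases h
    | appL h' =>
      obtain ⟨hne, r0, hi, hl⟩ := ih _ h'
      refine ⟨?_, .app r0 _, .appL hi, .appL hl⟩
      intro he; injection he with e1 e2; exact hne e1
    | appR h' =>
      refine ⟨?_, .app _ _, .appR h', .appL h⟩
      intro he; injection he with e1 e2; exact stepBI_ne h' e2
  | appR h ih =>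
    cases h2 with
    | beta hI => exact (inert_no_stepBL h hI).elim
    | appL h' =>
      refine ⟨?_, .app _ _, .appL h', .appR h⟩
      intro he; injection he with e1 e2; exact stepBI_ne h' e1
    | appR h' =>
      obtain ⟨hne, r0, hi, hl⟩ := ih _ h'
      refine ⟨?_, .app _ r0, .appR hi, .appR hl⟩
      intro he; injection he with e1 e2; exact hne e2
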